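/- arXiv:2203.06829 — 7 statements merged into one kernel-verified Lean document; each statement's English description precedes it below -/
import Mathlib

section
/- Let A be a real n×n matrix that is weakly diagonally dominant with negative diagonal entries, i.e., A_{ii} < 0 and A_{ii} + Σ_{j≠i} |A_{ij}| ≤ 0 for all i. Then for any a > 0 the matrix aI - A is invertible and its operator norm induced by the sup norm satisfies ‖(aI - A)^{-1}‖_∞ ≤ 1/a. -/
theorem stmt_3 (n : ℕ) (A : Matrix (Fin n) (Fin n) ℝ)
    (hdiag : ∀ i, A i i < 0)
    (hdom : ∀ i, A i i + ∑ j ∈ Finset.univ.erase i, |A i j| ≤ 0)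
    (a : ℝ) (ha : 0 < a) :
    IsUnit (a • (1 : Matrix (Fin n) (Fin n) ℝ) - A) ∧
      ∀ x : Fin n → ℝ,
        ‖(a • (1 : Matrix (Fin n) (Fin n) ℝ) - A)⁻¹.mulVec x‖ ≤ a⁻¹ * ‖x‖ := by
  set B : Matrix (Fin n) (Fin n) ℝ := a • (1 : Matrix (Fin n) (Fin n) ℝ) - A with hB
  have hBv : ∀ y : Fin n → ℝ, a * ‖y‖ ≤ ‖B.mulVec y‖ := by
    intro y
    rcases isEmpty_or_nonempty (Fin n) with h | h
    · have hy : y = 0 := Subsingleton.elim _ _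
      subst hy
      simp [Matrix.mulVec_zero]
    · obtain ⟨i, hi⟩ := Finite.exists_max (fun j => |y j|)
      have hnorm : ‖y‖ = |y i| := by
        refine le_antisymm ?_ ?_
        · exact (pi_norm_le_iff_of_nonneg (abs_nonneg _)).2 fun j => by
            simpa [Real.norm_eq_abs] using hi j
        · simpa [Real.norm_eq_abs] using norm_le_pi_norm y i
      have hexp : B.mulVec y = a • y - A.mulVec y := by
        rw [hB, Matrix.sub_mulVec, Matrix.smul_mulVec, Matrix.one_mulVec]
      have hAi : (A.mulVec y) i = A i i * y i + ∑ j ∈ Finset.univ.erase i, A i j * y j := by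
        rw [Matrix.mulVec, dotProduct]
        exact (Finset.add_sum_erase _ _ (Finset.mem_univ i)).symm
      have hS : |∑ j ∈ Finset.univ.erase i, A i j * y j|
          ≤ (∑ j ∈ Finset.univ.erase i, |A i j|) * |y i| := by
        calc |∑ j ∈ Finset.univ.erase i, A i j * y j|
            ≤ ∑ j ∈ Finset.univ.erase i, |A i j * y j| := Finset.abs_sum_le_sum_abs _ _
          _ ≤ ∑ j ∈ Finset.univ.erase i, |A i j| * |y i| := by
              refine Finset.sum_le_sum fun j _ => ?_
              rw [abs_mul]
              exact mul_le_mul_of_nonneg_left (hi j) (abs_nonneg _)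
          _ = (∑ j ∈ Finset.univ.erase i, |A i j|) * |y i| := by
              rw [Finset.sum_mul]
      have hcomp : a * |y i| ≤ |(B.mulVec y) i| := by
        have hval : (B.mulVec y) i = (a - A i i) * y i - ∑ j ∈ Finset.univ.erase i, A i j * y j := by
          rw [hexp]; simp [hAi]; ring
        rw [hval]
        have h1 : |(a - A i i) * y i| = (a - A i i) * |y i| := by
          rw [abs_mul, abs_of_pos (by linarith [hdiag i])]
        have h2 := abs_sub_abs_le_abs_sub ((a - A i i) * y i)
          (∑ j ∈ Finset.univ.erase i, A i j * y j)
        have h3 : (∑ j ∈ Finset.univ.erase i, |A i j|) * |y i| ≤ (-A i i) * |y i| :=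
          mul_le_mul_of_nonneg_right (by linarith [hdom i]) (abs_nonneg _)
        nlinarith [abs_nonneg (y i)]
      calc a * ‖y‖ = a * |y i| := by rw [hnorm]
        _ ≤ |(B.mulVec y) i| := hcomp
        _ ≤ ‖B.mulVec y‖ := by simpa [Real.norm_eq_abs] using norm_le_pi_norm (B.mulVec y) i
  have hunit : IsUnit B := by
    rw [Matrix.isUnit_iff_isUnit_det, isUnit_iff_ne_zero]
    intro hdet
    obtain ⟨v, hv, hv0⟩ := (Matrix.exists_mulVec_eq_zero_iff).2 hdet
    have h := hBv v
    rw [hv0] at h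
    simp only [norm_zero] at h
    have : ‖v‖ = 0 := le_antisymm (nonpos_of_mul_nonpos_right (by linarith) ha |>.trans (le_refl 0)) (norm_nonneg _)
    exact hv (norm_eq_zero.mp this)
  refine ⟨hunit, fun x => ?_⟩
  have hdet : IsUnit B.det := Matrix.isUnit_iff_isUnit_det B |>.1 hunit
  have hBx : B.mulVec (B⁻¹.mulVec x) = x := by
    rw [Matrix.mulVec_mulVec, Matrix.mul_nonsing_inv B hdet, Matrix.one_mulVec]
  have h := hBv (B⁻¹.mulVec x)
  rw [hBx] at h
  calc ‖B⁻¹.mulVec x‖ = a⁻¹ * (a * ‖B⁻¹.mulVec x‖) := by field_simp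
    _ ≤ a⁻¹ * ‖x‖ := mul_le_mul_of_nonneg_left h (by positivity)
end

section
/- Let g > 0, κ ≥ 0, τ > 0, ε > 0, and let A be a self-adjoint negative semidefinite linear operator on a finite-dimensional real inner product space V. Suppose u⁰, u¹, and a real s⁰, s¹ satisfy (u¹ - u⁰)/τ = ε²Au¹ + g·F - κg(u¹ - u⁰) for some F ∈ V, and (s¹ - s⁰)/τ = -g⟨F, (u¹ - u⁰)/τ⟩. Then the modified energy E(u, s) := (ε²/2)⟨-Au, u⟩ + s satisfies E(u¹, s¹) ≤ E(u⁰, s⁰), with equality only if u¹ = u⁰. -/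
open RealInnerProductSpace

theorem stmt_9 {V : Type*} [NormedAddCommGroup V] [InnerProductSpace ℝ V]
    [FiniteDimensional ℝ V]
    (A : V →ₗ[ℝ] V) (hsa : ∀ x y : V, ⟪A x, y⟫ = ⟪x, A y⟫)
    (hneg : ∀ x : V, ⟪A x, x⟫ ≤ 0)
    (g κ τ ε : ℝ) (hg : 0 < g) (hκ : 0 ≤ κ) (hτ : 0 < τ) (hε : 0 < ε)
    (u0 u1 F : V) (s0 s1 : ℝ)
    (hequ : (1 / τ) • (u1 - u0) = ε ^ 2 • A u1 + g • F - (κ * g) • (u1 - u0))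
    (heqs : (s1 - s0) / τ = -g * ⟪F, (1 / τ) • (u1 - u0)⟫) :
    (ε ^ 2 / 2) * ⟪-A u1, u1⟫ + s1 ≤ (ε ^ 2 / 2) * ⟪-A u0, u0⟫ + s0 ∧
      ((ε ^ 2 / 2) * ⟪-A u1, u1⟫ + s1 = (ε ^ 2 / 2) * ⟪-A u0, u0⟫ + s0 → u1 = u0) := by
  set d : V := u1 - u0 with hd
  -- inner product of the scheme equation with d
  have h1 : (1 / τ) * ⟪d, d⟫ =
      ε ^ 2 * ⟪A u1, d⟫ + g * ⟪F, d⟫ - (κ * g) * ⟪d, d⟫ := by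
    have := congrArg (fun v => ⟪v, d⟫) hequ
    simpa [inner_add_left, inner_sub_left, real_inner_smul_left] using this
  -- s-equation
  have h2 : s1 - s0 = -g * ⟪F, d⟫ := by
    have h := heqs
    rw [real_inner_smul_right] at h
    field_simp at h
    linarith
  -- energy difference identity
  have h3 : ⟪A u0, u0⟫ = ⟪A u1, u1⟫ - 2 * ⟪A u1, d⟫ + ⟪A d, d⟫ := by
    have hu0 : u0 = u1 - d := by simp [hd]
    rw [hu0]
    have h4 : ⟪A d, u1⟫ = ⟪A u1, d⟫ := by
      rw [hsa, real_inner_comm]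
    simp [map_sub, inner_sub_left, inner_sub_right, h4]
    ring
  have hdd : 0 ≤ ⟪d, d⟫ := real_inner_self_nonneg
  have hAd : ⟪A d, d⟫ ≤ 0 := hneg d
  have hkey : (ε ^ 2 / 2) * ⟪-A u1, u1⟫ + s1 - ((ε ^ 2 / 2) * ⟪-A u0, u0⟫ + s0)
      = -(1 / τ + κ * g) * ⟪d, d⟫ + (ε ^ 2 / 2) * ⟪A d, d⟫ := by
    simp only [inner_neg_left]
    rw [h3]
    linarith [h1, h2]
  have hτ' : 0 < 1 / τ + κ * g := by positivity
  constructor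
  · nlinarith
  · intro heq
    have h0 : ⟪d, d⟫ = 0 := by nlinarith
    have : d = 0 := by
      rwa [real_inner_self_eq_norm_sq, pow_eq_zero_iff (by norm_num), norm_eq_zero] at h0
    have := sub_eq_zero.mp this
    simpa [hd] using this
end

section
/- In the setting of the abstract sESAV1 step, the energy difference obeys the identity E(u¹, s¹) - E(u⁰, s⁰) = -(1/τ + κg)‖u¹ - u⁰‖² - (ε²/2)⟨-A(u¹ - u⁰), u¹ - u⁰⟩, where both terms on the right are ≤ 0. -/
open RealInnerProductSpace

theorem stmt_10 {V : Type*} [NormedAddCommGroup V] [InnerProductSpace ℝ V]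
    [FiniteDimensional ℝ V]
    (A : V →ₗ[ℝ] V) (hsa : ∀ x y : V, ⟪A x, y⟫ = ⟪x, A y⟫)
    (hneg : ∀ x : V, ⟪A x, x⟫ ≤ 0)
    (g κ τ ε : ℝ) (hg : 0 < g) (hκ : 0 ≤ κ) (hτ : 0 < τ) (hε : 0 < ε)
    (u0 u1 F : V) (s0 s1 : ℝ)
    (hequ : (1 / τ) • (u1 - u0) = ε ^ 2 • A u1 + g • F - (κ * g) • (u1 - u0))
    (heqs : (s1 - s0) / τ = -g * ⟪F, (1 / τ) • (u1 - u0)⟫) :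
    ((ε ^ 2 / 2) * ⟪-A u1, u1⟫ + s1) - ((ε ^ 2 / 2) * ⟪-A u0, u0⟫ + s0)
        = -(1 / τ + κ * g) * ‖u1 - u0‖ ^ 2
          - (ε ^ 2 / 2) * ⟪-A (u1 - u0), u1 - u0⟫ ∧
      -(1 / τ + κ * g) * ‖u1 - u0‖ ^ 2 ≤ 0 ∧
      -(ε ^ 2 / 2) * ⟪-A (u1 - u0), u1 - u0⟫ ≤ 0 := by
  set w := u1 - u0 with hw
  have hnn : ⟪w, w⟫ = ‖w‖ ^ 2 := real_inner_self_eq_norm_sq w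
  have h1 : (1 / τ) * ⟪w, w⟫
      = ε ^ 2 * ⟪A u1, w⟫ + g * ⟪F, w⟫ - (κ * g) * ⟪w, w⟫ := by
    have := congrArg (fun v => ⟪v, w⟫) hequ
    simpa [inner_add_left, inner_sub_left, real_inner_smul_left] using this
  have h2 : s1 - s0 = -g * ⟪F, w⟫ := by
    have h := heqs
    rw [real_inner_smul_right] at h
    field_simp at h
    nlinarith [h]
  have hsym : ⟪A u1, u0⟫ = ⟪A u0, u1⟫ := by rw [hsa, real_inner_comm]
  have hAw : ⟪A w, w⟫
      = ⟪A u1, u1⟫ - ⟪A u1, u0⟫ - ⟪A u0, u1⟫ + ⟪A u0, u0⟫ := by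
    simp only [hw, map_sub, inner_sub_left, inner_sub_right]
    ring
  have hA1w : ⟪A u1, w⟫ = ⟪A u1, u1⟫ - ⟪A u1, u0⟫ := by
    simp [hw, inner_sub_right]
  have hwn : (0:ℝ) ≤ ‖w‖ ^ 2 := by positivity
  refine ⟨?_, ?_, ?_⟩
  · simp only [inner_neg_left]
    rw [← hnn] at *
    nlinarith [h1, h2, hAw, hA1w, hsym]
  · have h1τ : 0 < 1 / τ := by positivity
    nlinarith [mul_nonneg hκ hg.le]
  · simp only [inner_neg_left]
    nlinarith [hneg w, sq_nonneg ε]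
end

section
/- Let A be a real n×n matrix that is weakly diagonally dominant with negative diagonal entries, a > 0, κ ≥ 0, g > 0, τ > 0, β > 0. Suppose u⁰ ∈ ℝⁿ with ‖u⁰‖_∞ ≤ β and w = f(u⁰) + κu⁰ ∈ ℝⁿ with ‖w‖_∞ ≤ κβ and ‖(1/τ)u⁰ + g·w‖_∞ ≤ (1/τ + κg)β. If u¹ solves ((1/τ + κg)I - ε²A)u¹ = (1/τ)u⁰ + g·w with ε > 0, then ‖u¹‖_∞ ≤ β. -/
theorem stmt_12 (n : ℕ) (A : Matrix (Fin n) (Fin n) ℝ)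
    (hdiag : ∀ i, A i i < 0)
    (hdom : ∀ i, A i i + ∑ j ∈ Finset.univ.erase i, |A i j| ≤ 0)
    (κ g τ β ε : ℝ) (hκ : 0 ≤ κ) (hg : 0 < g) (hτ : 0 < τ) (hβ : 0 < β)
    (hε : 0 < ε)
    (u0 w u1 : Fin n → ℝ)
    (hu0 : ∀ i, |u0 i| ≤ β)
    (hw : ∀ i, |w i| ≤ κ * β)
    (hrhs : ∀ i, |(1 / τ) * u0 i + g * w i| ≤ (1 / τ + κ * g) * β)
    (heq : ((1 / τ + κ * g) • (1 : Matrix (Fin n) (Fin n) ℝ)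
        - ε ^ 2 • A).mulVec u1 = fun i => (1 / τ) * u0 i + g * w i) :
    ∀ i, |u1 i| ≤ β := by
  intro i
  have hc : 0 < 1 / τ + κ * g := by positivity
  obtain ⟨i₀, -, hmax⟩ := Finset.exists_max_image Finset.univ (fun j => |u1 j|)
    ⟨i, Finset.mem_univ i⟩
  have hmax' : ∀ j, |u1 j| ≤ |u1 i₀| := fun j => hmax j (Finset.mem_univ j)
  suffices h : |u1 i₀| ≤ β from le_trans (hmax' i) h
  set c := 1 / τ + κ * g with hcdef
  set M := |u1 i₀| with hM
  have hM0 : 0 ≤ M := abs_nonneg _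
  rw [Matrix.sub_mulVec, Matrix.smul_mulVec, Matrix.smul_mulVec,
    Matrix.one_mulVec] at heq
  have hcomp : c * u1 i₀ - ε ^ 2 * (A.mulVec u1 i₀) = (1 / τ) * u0 i₀ + g * w i₀ := by
    have := congrFun heq i₀
    simpa using this
  have hsplit : A.mulVec u1 i₀ =
      A i₀ i₀ * u1 i₀ + ∑ j ∈ Finset.univ.erase i₀, A i₀ j * u1 j := by
    rw [Matrix.mulVec, dotProduct,
      ← Finset.add_sum_erase Finset.univ _ (Finset.mem_univ i₀)]
  set S := ∑ j ∈ Finset.univ.erase i₀, A i₀ j * u1 j with hS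
  have hSle : |S| ≤ (-A i₀ i₀) * M := by
    calc |S| ≤ ∑ j ∈ Finset.univ.erase i₀, |A i₀ j * u1 j| := Finset.abs_sum_le_sum_abs _ _
    _ ≤ ∑ j ∈ Finset.univ.erase i₀, |A i₀ j| * M := by
        apply Finset.sum_le_sum
        intro j _
        rw [abs_mul]
        exact mul_le_mul_of_nonneg_left (hmax' j) (abs_nonneg _)
    _ = (∑ j ∈ Finset.univ.erase i₀, |A i₀ j|) * M := by rw [Finset.sum_mul]
    _ ≤ (-A i₀ i₀) * M := by
        apply mul_le_mul_of_nonneg_right _ hM0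
        linarith [hdom i₀]
  have hε2 : 0 < ε ^ 2 := by positivity
  have hkey : c * M ≤ |(1 / τ) * u0 i₀ + g * w i₀| := by
    rw [← hcomp, hsplit]
    have h1 : |c * u1 i₀ - ε ^ 2 * (A i₀ i₀ * u1 i₀)| = (c - ε ^ 2 * A i₀ i₀) * M := by
      rw [show c * u1 i₀ - ε ^ 2 * (A i₀ i₀ * u1 i₀) = (c - ε ^ 2 * A i₀ i₀) * u1 i₀ by ring,
        abs_mul, abs_of_pos]
      nlinarith [hdiag i₀]
    have h2 : |c * u1 i₀ - ε ^ 2 * (A i₀ i₀ * u1 i₀)| - |ε ^ 2 * S| ≤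
        |c * u1 i₀ - ε ^ 2 * (A i₀ i₀ * u1 i₀ + S)| := by
      have := abs_sub_abs_le_abs_sub (c * u1 i₀ - ε ^ 2 * (A i₀ i₀ * u1 i₀)) (ε ^ 2 * S)
      calc |c * u1 i₀ - ε ^ 2 * (A i₀ i₀ * u1 i₀)| - |ε ^ 2 * S|
          ≤ |c * u1 i₀ - ε ^ 2 * (A i₀ i₀ * u1 i₀) - ε ^ 2 * S| := this
        _ = |c * u1 i₀ - ε ^ 2 * (A i₀ i₀ * u1 i₀ + S)| := by ring_nf
    have h3 : |ε ^ 2 * S| ≤ ε ^ 2 * ((-A i₀ i₀) * M) := by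
      rw [abs_mul, abs_of_pos hε2]
      exact mul_le_mul_of_nonneg_left hSle hε2.le
    nlinarith [h1, h2, h3]
  have := le_trans hkey (hrhs i₀)
  exact le_of_mul_le_mul_left (by linarith) hc
end

section
/- Let f : ℝ → ℝ be continuously differentiable with f(β) ≤ 0 ≤ f(-β) for some β > 0, and κ ≥ sup_{[-β,β]}|f'|. Let A be the periodic second-order finite-difference Laplacian on a uniform grid (viewed as a weakly diagonally dominant matrix with negative diagonal entries). For any g > 0, τ > 0, ε > 0, define u¹ = ((1/τ + κg)I - ε²A)^{-1}[(1/τ)u⁰ + g(f(u⁰) + κu⁰)] (with f applied componentwise). If ‖u⁰‖_∞ ≤ β then ‖u¹‖_∞ ≤ β. -/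
/-!
The nonlinear term is stabilized: `x ↦ f x + κ x` is monotone on `[-β, β]` because `κ ≥ |f'|`
there, so the explicit right-hand side evaluated at `|u⁰| ≤ β` lies in `[-(1/τ + κg)β, (1/τ + κg)β]`
thanks to the sign conditions on `f(±β)`. The implicit operator `(1/τ + κg)I - ε²A` then satisfies
a discrete maximum principle: at a maximum point of `u¹` the second difference is nonpositive, so
`(1/τ + κg) max u¹` is bounded by the maximum of the right-hand side, and likewise for the minimum.
-/

open Set

theorem monotoneOn_add_mul_of_abs_deriv_le {f : ℝ → ℝ} {a b κ : ℝ} (hf : Differentiable ℝ f)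
    (hκ : ∀ ξ ∈ Icc a b, |deriv f ξ| ≤ κ) : MonotoneOn (fun x => f x + κ * x) (Icc a b) := by
  have hderiv : ∀ x, HasDerivAt (fun x => f x + κ * x) (deriv f x + κ) x := fun x => by
    simpa using (hf x).hasDerivAt.fun_add ((hasDerivAt_id x).const_mul κ)
  refine monotoneOn_of_deriv_nonneg (convex_Icc a b)
    (fun x _ => (hderiv x).continuousAt.continuousWithinAt)
    (fun x _ => (hderiv x).differentiableAt.differentiableWithinAt) fun x hx => ?_
  rw [interior_Icc] at hx
  rw [(hderiv x).deriv]
  linarith [neg_abs_le (deriv f x), hκ x (Ioo_subset_Icc_self hx)]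

theorem abs_add_mul_stabilized_le {f : ℝ → ℝ} {β κ a g x : ℝ}
    (hmono : MonotoneOn (fun x => f x + κ * x) (Icc (-β) β))
    (hfβ : f β ≤ 0) (hfmβ : 0 ≤ f (-β)) (ha : 0 ≤ a) (hg : 0 ≤ g) (hx : x ∈ Icc (-β) β) :
    |a * x + g * (f x + κ * x)| ≤ (a + κ * g) * β := by
  have hβ : -β ≤ β := hx.1.trans hx.2
  have hup : f x + κ * x ≤ f β + κ * β := hmono hx ⟨hβ, le_rfl⟩ hx.2
  have hlow : f (-β) + κ * -β ≤ f x + κ * x := hmono ⟨le_rfl, hβ⟩ hx hx.1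
  rw [abs_le]
  constructor
  · nlinarith [mul_le_mul_of_nonneg_left hlow hg, mul_le_mul_of_nonneg_left hx.1 ha]
  · nlinarith [mul_le_mul_of_nonneg_left hup hg, mul_le_mul_of_nonneg_left hx.2 ha]

section MaximumPrinciple

variable {M : ℕ} {c d b : ℝ}

theorem le_of_implicit_step_le [NeZero M] (hc : 0 < c) (hd : 0 ≤ d) {u : ZMod M → ℝ}
    (hu : ∀ i, c * u i - d * (u (i + 1) + u (i - 1) - 2 * u i) ≤ c * b) (i : ZMod M) :
    u i ≤ b := by
  obtain ⟨i₀, hi₀⟩ := Finite.exists_max u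
  have hsecond : u (i₀ + 1) + u (i₀ - 1) - 2 * u i₀ ≤ 0 := by
    linarith [hi₀ (i₀ + 1), hi₀ (i₀ - 1)]
  have : c * u i₀ ≤ c * b := by linarith [hu i₀, mul_nonpos_of_nonneg_of_nonpos hd hsecond]
  exact (hi₀ i).trans (le_of_mul_le_mul_left this hc)

theorem abs_le_of_abs_implicit_step_le [NeZero M] (hc : 0 < c) (hd : 0 ≤ d) {u : ZMod M → ℝ}
    (hu : ∀ i, |c * u i - d * (u (i + 1) + u (i - 1) - 2 * u i)| ≤ c * b) (i : ZMod M) :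
    |u i| ≤ b := by
  refine abs_le.2 ⟨?_, le_of_implicit_step_le hc hd (fun j => (abs_le.1 (hu j)).2) i⟩
  have hneg := le_of_implicit_step_le hc hd (u := -u) (b := b) (fun j => by
    simp only [Pi.neg_apply]
    linarith [(abs_le.1 (hu j)).1]) i
  simp only [Pi.neg_apply] at hneg
  linarith

end MaximumPrinciple

theorem stmt_13_general (M : ℕ) (hM : 3 ≤ M) (f : ℝ → ℝ) (β κ g τ ε h : ℝ)
    (hf : ContDiff ℝ 1 f)
    (hfβ : f β ≤ 0) (hfmβ : 0 ≤ f (-β))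
    (hκ : ∀ ξ ∈ Set.Icc (-β) β, |deriv f ξ| ≤ κ)
    (hg : 0 < g) (hτ : 0 < τ)
    (u0 u1 : ZMod M → ℝ)
    (heq : ∀ i : ZMod M,
      (1 / τ + κ * g) * u1 i
        - ε ^ 2 * ((u1 (i + 1) + u1 (i - 1) - 2 * u1 i) / h ^ 2)
      = (1 / τ) * u0 i + g * (f (u0 i) + κ * u0 i))
    (hu0 : ∀ i, |u0 i| ≤ β) :
    ∀ i, |u1 i| ≤ β := by
  have : NeZero M := ⟨by omega⟩
  have hβ : 0 ≤ β := (abs_nonneg _).trans (hu0 0)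
  have hκ0 : 0 ≤ κ := (abs_nonneg _).trans (hκ 0 ⟨by linarith, hβ⟩)
  have hmono := monotoneOn_add_mul_of_abs_deriv_le (hf.differentiable one_ne_zero) hκ
  refine abs_le_of_abs_implicit_step_le (c := 1 / τ + κ * g) (d := ε ^ 2 / h ^ 2) (by positivity) (by positivity)
    fun i => ?_
  have hstep : (1 / τ + κ * g) * u1 i - ε ^ 2 / h ^ 2 * (u1 (i + 1) + u1 (i - 1) - 2 * u1 i)
      = (1 / τ) * u0 i + g * (f (u0 i) + κ * u0 i) := by
    rw [← heq i]; ring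
  rw [hstep]
  exact abs_add_mul_stabilized_le hmono hfβ hfmβ (by positivity) hg.le (abs_le.1 (hu0 i))

theorem stmt_13 (M : ℕ) (hM : 3 ≤ M) (f : ℝ → ℝ) (β κ g τ ε h : ℝ)
    (hβ : 0 < β) (hf : ContDiff ℝ 1 f)
    (hfβ : f β ≤ 0) (hfmβ : 0 ≤ f (-β))
    (hκ : ∀ ξ ∈ Set.Icc (-β) β, |deriv f ξ| ≤ κ)
    (hg : 0 < g) (hτ : 0 < τ) (hε : 0 < ε) (hh : 0 < h)
    (u0 u1 : ZMod M → ℝ)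
    (heq : ∀ i : ZMod M,
      (1 / τ + κ * g) * u1 i
        - ε ^ 2 * ((u1 (i + 1) + u1 (i - 1) - 2 * u1 i) / h ^ 2)
      = (1 / τ) * u0 i + g * (f (u0 i) + κ * u0 i))
    (hu0 : ∀ i, |u0 i| ≤ β) :
    ∀ i, |u1 i| ≤ β :=
  stmt_13_general M hM f β κ g τ ε h hf hfβ hfmβ hκ hg hτ u0 u1 heq hu0
end

section
/- Let g > 0, κ ≥ 0, τ > 0, ε > 0, and let A be a self-adjoint negative semidefinite operator on a finite-dimensional real inner product space. Given u⁰, û, F in the space and s⁰, ŝ ∈ ℝ, suppose u¹ and s¹ satisfy (u¹ - u⁰)/τ = ε²A((u¹ + u⁰)/2) + gF - κg((u¹ + u⁰)/2 - û) and (s¹ - s⁰)/τ = -g⟨F, (u¹ - u⁰)/τ⟩ + κg⟨(u¹ + u⁰)/2 - û, (u¹ - u⁰)/τ⟩. Then the modified energy E(u, s) := (ε²/2)⟨-Au, u⟩ + s satisfies E(u¹, s¹) - E(u⁰, s⁰) = -(1/τ)‖u¹ - u⁰‖² ≤ 0. -/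
/-!
Pairing the `u`-equation with `u¹ - u⁰` gives
`‖u¹ - u⁰‖² / τ = ε² ⟪A m, u¹ - u⁰⟫ + ⟪G, u¹ - u⁰⟫`, where `m` is the midpoint and `G` collects
the explicit terms. The `s`-equation is built so that `s¹ - s⁰ = -⟪G, u¹ - u⁰⟫` cancels the
second term exactly, and symmetry of `A` turns the first into `(⟪A u¹, u¹⟫ - ⟪A u⁰, u⁰⟫) / 2`.
-/

open RealInnerProductSpace

section

variable {V : Type*} [SeminormedAddCommGroup V] [InnerProductSpace ℝ V]

noncomputable def modifiedEnergy (A : V →ₗ[ℝ] V) (c : ℝ) (u : V) (s : ℝ) : ℝ :=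
  (c / 2) * ⟪-A u, u⟫ + s

theorem LinearMap.IsSymmetric.inner_map_midpoint_sub {A : V →ₗ[ℝ] V} (hA : A.IsSymmetric)
    (x y : V) :
    ⟪A ((1 / 2 : ℝ) • (x + y)), x - y⟫ = (⟪A x, x⟫ - ⟪A y, y⟫) / 2 := by
  have hxy : ⟪A x, y⟫ = ⟪A y, x⟫ := by rw [hA, real_inner_comm]
  simp only [map_smul, map_add, real_inner_smul_left, inner_add_left, inner_sub_right]
  linear_combination (-1 / 2 : ℝ) * hxy

theorem modifiedEnergy_sub_of_crankNicolson {A : V →ₗ[ℝ] V} (hA : A.IsSymmetric)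
    {c τ : ℝ} (hτ : τ ≠ 0) {u0 u1 G : V} {s0 s1 : ℝ}
    (hu : (1 / τ) • (u1 - u0) = c • A ((1 / 2 : ℝ) • (u1 + u0)) + G)
    (hs : (s1 - s0) / τ = -⟪G, (1 / τ) • (u1 - u0)⟫) :
    modifiedEnergy A c u1 s1 - modifiedEnergy A c u0 s0 = -(1 / τ) * ‖u1 - u0‖ ^ 2 := by
  have hpair : (1 / τ) * ‖u1 - u0‖ ^ 2
      = c * ((⟪A u1, u1⟫ - ⟪A u0, u0⟫) / 2) + ⟪G, u1 - u0⟫ := by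
    have := congrArg (fun v => ⟪v, u1 - u0⟫) hu
    simpa only [real_inner_smul_left, inner_add_left, real_inner_self_eq_norm_sq,
      hA.inner_map_midpoint_sub] using this
  have hs' : s1 - s0 = -⟪G, u1 - u0⟫ := by
    rw [real_inner_smul_right, div_eq_iff hτ] at hs
    rw [hs]
    field_simp
  simp only [modifiedEnergy, inner_neg_left]
  linear_combination hs' + hpair

end

theorem stmt_18_general {V : Type*} [NormedAddCommGroup V] [InnerProductSpace ℝ V]
    (A : V →ₗ[ℝ] V) (hsa : ∀ x y : V, ⟪A x, y⟫ = ⟪x, A y⟫)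
    (g κ τ ε : ℝ) (hτ : 0 < τ)
    (u0 u1 uhat F : V) (s0 s1 : ℝ)
    (hequ : (1 / τ) • (u1 - u0)
        = ε ^ 2 • A ((1 / 2 : ℝ) • (u1 + u0)) + g • F
          - (κ * g) • ((1 / 2 : ℝ) • (u1 + u0) - uhat))
    (heqs : (s1 - s0) / τ
        = -g * ⟪F, (1 / τ) • (u1 - u0)⟫
          + κ * g * ⟪(1 / 2 : ℝ) • (u1 + u0) - uhat, (1 / τ) • (u1 - u0)⟫) :
    ((ε ^ 2 / 2) * ⟪-A u1, u1⟫ + s1) - ((ε ^ 2 / 2) * ⟪-A u0, u0⟫ + s0)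
        = -(1 / τ) * ‖u1 - u0‖ ^ 2 ∧
      -(1 / τ) * ‖u1 - u0‖ ^ 2 ≤ 0 := by
  set G := g • F - (κ * g) • ((1 / 2 : ℝ) • (u1 + u0) - uhat)
  have hu : (1 / τ) • (u1 - u0) = ε ^ 2 • A ((1 / 2 : ℝ) • (u1 + u0)) + G := by
    rw [hequ, add_sub_assoc]
  have hs : (s1 - s0) / τ = -⟪G, (1 / τ) • (u1 - u0)⟫ := by
    simp only [heqs, G, inner_sub_left, real_inner_smul_left]
    ring
  refine ⟨modifiedEnergy_sub_of_crankNicolson hsa hτ.ne' hu hs, ?_⟩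
  rw [neg_mul, neg_nonpos]
  positivity

theorem stmt_18 {V : Type*} [NormedAddCommGroup V] [InnerProductSpace ℝ V]
    [FiniteDimensional ℝ V]
    (A : V →ₗ[ℝ] V) (hsa : ∀ x y : V, ⟪A x, y⟫ = ⟪x, A y⟫)
    (hneg : ∀ x : V, ⟪A x, x⟫ ≤ 0)
    (g κ τ ε : ℝ) (hg : 0 < g) (hκ : 0 ≤ κ) (hτ : 0 < τ) (hε : 0 < ε)
    (u0 u1 uhat F : V) (s0 s1 shat : ℝ)
    (hequ : (1 / τ) • (u1 - u0)
        = ε ^ 2 • A ((1 / 2 : ℝ) • (u1 + u0)) + g • F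
          - (κ * g) • ((1 / 2 : ℝ) • (u1 + u0) - uhat))
    (heqs : (s1 - s0) / τ
        = -g * ⟪F, (1 / τ) • (u1 - u0)⟫
          + κ * g * ⟪(1 / 2 : ℝ) • (u1 + u0) - uhat, (1 / τ) • (u1 - u0)⟫) :
    ((ε ^ 2 / 2) * ⟪-A u1, u1⟫ + s1) - ((ε ^ 2 / 2) * ⟪-A u0, u0⟫ + s0)
        = -(1 / τ) * ‖u1 - u0‖ ^ 2 ∧
      -(1 / τ) * ‖u1 - u0‖ ^ 2 ≤ 0 :=
  stmt_18_general A hsa g κ τ ε hτ u0 u1 uhat F s0 s1 hequ heqs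
end

section
/- Let A be a real n×n weakly diagonally dominant matrix with negative diagonal entries such that ‖A‖_∞ ≤ 4ε²/h² · (1/ε²) in the sense that every row of ε²A has absolute row sum at most 4ε²/h² (as for the 5-point periodic Laplacian times ε²). Let g > 0, κ ≥ 0, β > 0, and suppose τ > 0 satisfies 2/τ - κg ≥ 2ε²/h², so that the matrix (2/τ - κg)I + ε²A has induced sup-norm at most 2/τ - κg. If ‖u⁰‖_∞ ≤ β, ‖û‖_∞ ≤ β, and ‖f(û) + κû‖_∞ ≤ κβ, then u¹ defined by ((2/τ + κg)I - ε²A)u¹ = ((2/τ - κg)I + ε²A)u⁰ + 2g(f(û) + κû) satisfies ‖u¹‖_∞ ≤ β. -/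
theorem stmt_19 (n : ℕ) (A : Matrix (Fin n) (Fin n) ℝ)
    (hdiag : ∀ i, A i i < 0)
    (hdom : ∀ i, A i i + ∑ j ∈ Finset.univ.erase i, |A i j| ≤ 0)
    (ε h g κ β τ : ℝ) (hε : 0 < ε) (hh : 0 < h) (hg : 0 < g) (hκ : 0 ≤ κ)
    (hβ : 0 < β) (hτ : 0 < τ)
    (hrow : ∀ i, ∑ j, |ε ^ 2 * A i j| ≤ 4 * ε ^ 2 / h ^ 2)
    (hstep : 2 / τ - κ * g ≥ 2 * ε ^ 2 / h ^ 2)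
    (f : ℝ → ℝ) (u0 uhat u1 : Fin n → ℝ)
    (hu0 : ∀ i, |u0 i| ≤ β) (huhat : ∀ i, |uhat i| ≤ β)
    (hw : ∀ i, |f (uhat i) + κ * uhat i| ≤ κ * β)
    (heq : ((2 / τ + κ * g) • (1 : Matrix (Fin n) (Fin n) ℝ)
        - ε ^ 2 • A).mulVec u1
      = ((2 / τ - κ * g) • (1 : Matrix (Fin n) (Fin n) ℝ)
        + ε ^ 2 • A).mulVec u0
        + fun i => 2 * g * (f (uhat i) + κ * uhat i)) :
    ∀ i, |u1 i| ≤ β := by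
  intro i0
  obtain ⟨i, -, hi⟩ := Finset.exists_max_image Finset.univ (fun j => |u1 j|)
    ⟨i0, Finset.mem_univ i0⟩
  have hi' : ∀ j, |u1 j| ≤ |u1 i| := fun j => hi j (Finset.mem_univ j)
  refine le_trans (hi' i0) ?_
  set s : ℝ := ∑ j ∈ Finset.univ.erase i, |A i j| with hs
  have hε2 : (0:ℝ) ≤ ε ^ 2 := sq_nonneg ε
  have hMpos : 0 < 2 / τ + κ * g := by positivity
  -- absolute row sum identity
  have hrw : ε ^ 2 * (-A i i + s) ≤ 4 * ε ^ 2 / h ^ 2 := by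
    have h1 : ∑ j, |ε ^ 2 * A i j| = ε ^ 2 * (-A i i + s) := by
      rw [← Finset.add_sum_erase _ (fun j => |ε ^ 2 * A i j|) (Finset.mem_univ i)]
      have : ∀ j, |ε ^ 2 * A i j| = ε ^ 2 * |A i j| := fun j => by
        rw [abs_mul, abs_of_nonneg hε2]
      simp only [this]
      rw [abs_of_neg (hdiag i), ← Finset.mul_sum, ← hs]
      ring
    rw [← h1]; exact hrow i
  -- row-sum bound for the explicit matrix
  have hrowbd : |(2 / τ - κ * g) + ε ^ 2 * A i i| + ε ^ 2 * s ≤ 2 / τ - κ * g := by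
    have hds : ε ^ 2 * (A i i + s) ≤ 0 :=
      mul_nonpos_of_nonneg_of_nonpos hε2 (hdom i)
    have hexp : -(ε ^ 2 * A i i) + ε ^ 2 * s ≤ 4 * ε ^ 2 / h ^ 2 := by nlinarith [hrw]
    have hdouble : 4 * ε ^ 2 / h ^ 2 = 2 * (2 * ε ^ 2 / h ^ 2) := by ring
    rcases le_or_gt 0 ((2 / τ - κ * g) + ε ^ 2 * A i i) with hcase | hcase
    · rw [abs_of_nonneg hcase]; nlinarith [hds]
    · rw [abs_of_neg hcase]; linarith [hexp, hstep, hdouble]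
  -- expand the i-th row of the scheme
  have heqi := congrFun heq i
  simp only [Matrix.sub_mulVec, Matrix.add_mulVec, Matrix.smul_mulVec,
    Matrix.one_mulVec, Pi.add_apply, Pi.sub_apply, Pi.smul_apply, smul_eq_mul] at heqi
  have hmv : ∀ v : Fin n → ℝ,
      A.mulVec v i = A i i * v i + ∑ j ∈ Finset.univ.erase i, A i j * v j := by
    intro v
    rw [Matrix.mulVec, dotProduct,
      ← Finset.add_sum_erase _ (fun j => A i j * v j) (Finset.mem_univ i)]
  rw [hmv u1, hmv u0] at heqi
  -- rearranged equation
  have hkey : (2 / τ + κ * g - ε ^ 2 * A i i) * u1 i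
      = ε ^ 2 * ∑ j ∈ Finset.univ.erase i, A i j * u1 j
        + ((2 / τ - κ * g) + ε ^ 2 * A i i) * u0 i
        + ε ^ 2 * ∑ j ∈ Finset.univ.erase i, A i j * u0 j
        + 2 * g * (f (uhat i) + κ * uhat i) := by linarith [heqi]
  have hsum_bd : ∀ (v : Fin n → ℝ) (b : ℝ), (∀ j, |v j| ≤ b) →
      |∑ j ∈ Finset.univ.erase i, A i j * v j| ≤ s * b := by
    intro v b hv
    calc |∑ j ∈ Finset.univ.erase i, A i j * v j|
        ≤ ∑ j ∈ Finset.univ.erase i, |A i j * v j| := Finset.abs_sum_le_sum_abs _ _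
      _ ≤ ∑ j ∈ Finset.univ.erase i, |A i j| * b := by
          refine Finset.sum_le_sum fun j _ => ?_
          rw [abs_mul]
          exact mul_le_mul_of_nonneg_left (hv j) (abs_nonneg _)
      _ = s * b := by rw [hs, Finset.sum_mul]
  have hb1 := hsum_bd u1 (|u1 i|) hi'
  have hb0 := hsum_bd u0 β hu0
  -- bound |u1 i|
  have hlhs : (2 / τ + κ * g - ε ^ 2 * A i i) * |u1 i|
      = |(2 / τ + κ * g - ε ^ 2 * A i i) * u1 i| := by
    rw [abs_mul, abs_of_pos (by nlinarith [hdiag i] : (0:ℝ) < 2 / τ + κ * g - ε ^ 2 * A i i)]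
  have hmain : (2 / τ + κ * g - ε ^ 2 * A i i) * |u1 i|
      ≤ ε ^ 2 * (s * |u1 i|) + |(2 / τ - κ * g) + ε ^ 2 * A i i| * β
        + ε ^ 2 * (s * β) + 2 * g * (κ * β) := by
    rw [hlhs, hkey]
    have t1 : |ε ^ 2 * ∑ j ∈ Finset.univ.erase i, A i j * u1 j| ≤ ε ^ 2 * (s * |u1 i|) := by
      rw [abs_mul, abs_of_nonneg hε2]
      exact mul_le_mul_of_nonneg_left hb1 hε2
    have t0 : |ε ^ 2 * ∑ j ∈ Finset.univ.erase i, A i j * u0 j| ≤ ε ^ 2 * (s * β) := by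
      rw [abs_mul, abs_of_nonneg hε2]
      exact mul_le_mul_of_nonneg_left hb0 hε2
    have t2 : |((2 / τ - κ * g) + ε ^ 2 * A i i) * u0 i|
        ≤ |(2 / τ - κ * g) + ε ^ 2 * A i i| * β := by
      rw [abs_mul]
      exact mul_le_mul_of_nonneg_left (hu0 i) (abs_nonneg _)
    have t3 : |2 * g * (f (uhat i) + κ * uhat i)| ≤ 2 * g * (κ * β) := by
      rw [abs_mul, abs_of_pos (by positivity : (0:ℝ) < 2 * g)]
      exact mul_le_mul_of_nonneg_left (hw i) (by positivity)
    refine le_trans (abs_add_le _ _) ?_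
    refine add_le_add (le_trans (abs_add_le _ _) ?_) t3
    refine add_le_add (le_trans (abs_add_le _ _) ?_) t0
    exact add_le_add t1 t2
  -- conclude
  have hds : ε ^ 2 * (A i i + s) ≤ 0 :=
    mul_nonpos_of_nonneg_of_nonpos hε2 (hdom i)
  have habs : 0 ≤ |u1 i| := abs_nonneg _
  nlinarith [mul_le_mul_of_nonneg_right hrowbd hβ.le, hmain, hds, habs,
    mul_nonneg (neg_nonneg.mpr hds) habs, hMpos]
end
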